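/- Let ψ : H → ℝ^m be Hadamard differentiable at f_{P,λ_0} with derivative ψ'_{f_{P,λ_0}} = (ψ'_{f_{P,λ_0},1},…,ψ'_{f_{P,λ_0},m}) ∈ H^m, and let Σ_P = Cov(g_{P,λ_0}(X_1,Y_1)). Assume that for P_X-almost every x ∈ X there exist y_1, y_2 ∈ supp(P(dy|x)) with L'(x,y_1,f_{P,λ_0}(x)) ≠ L'(x,y_2,f_{P,λ_0}(x)). Then Σ_P has full rank if and only if there is no a ∈ ℝ^m \ {0} such that aᵀψ'_{f_{P,λ_0}}(x) = Σ_j a_j ψ'_{f_{P,λ_0},j}(x) = 0 for P_X-almost every x ∈ X. -/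

import Mathlib

/-!
For `a ∈ ℝ^m` put `h_a = ∑ j, a j • ψ'_j`. Since `Σ_P` is a covariance matrix, `Σ_P a = 0` iff
`aᵀ g_{P,λ₀}` is a.s. constant, and by symmetry of `K_P` this function is
`(x, y) ↦ -L'(x, y, f_{P,λ₀}(x)) · (K_P⁻¹ h_a)(x)`. It is continuous, so an a.s. constant value
is attained on the whole conditional support of `P(dy|x)` for `P_X`-a.e. `x`; as `L'` takes two
different values there, `K_P⁻¹ h_a = 0` `P_X`-a.s. Finally, for `u = K_P⁻¹ h_a` we have
`h_a = 2λ₀ u + ∫ L'' u(x) Φ(x) dP`, and pairing the integral term with itself shows, because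
`L'' ≥ 0` by convexity, that `u` vanishes `P_X`-a.s. iff `h_a` does.
-/

open MeasureTheory ProbabilityTheory Filter Topology
open scoped RealInnerProductSpace NNReal ENNReal BigOperators

noncomputable section

/-- The setting of the paper: a regularized kernel method for nonparametric
regression/classification.  `X ⊆ ℝ^d` closed and bounded, `Y ⊆ ℝ` closed, `k` the restriction of
an `r`-times continuously differentiable kernel with `r > d/2`, `H` its RKHS with canonical
feature map `Φ` (so `f(x) = ⟪f, Φ x⟫`), `P` an unknown probability distribution on `X × Y`,
`L` a convex `P`-square-integrable Nemitski loss of order `p` with continuous partial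
derivatives `L'`, `L''` satisfying the envelope conditions, `fP lam` the unique minimizer of the
`lam`-regularized risk, `fD n D lam` the unique minimizer of the `lam`-regularized empirical
risk for the data set `D`, and `Z 0, Z 1, …` an i.i.d. sequence with distribution `P` on a
probability space `(Ω, 𝓐, Q)`. -/
structure RegKernelSetting (d : ℕ) (H : Type) [NormedAddCommGroup H]
    [InnerProductSpace ℝ H] [CompleteSpace H] (Ω : Type) [MeasurableSpace Ω] where
  X : Set (EuclideanSpace ℝ (Fin d))
  Y : Set ℝ
  hXclosed : IsClosed X
  hXbdd : Bornology.IsBounded X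
  hYclosed : IsClosed Y
  /-- differentiability order of the kernel -/
  r : ℕ
  hr : (d : ℝ) / 2 < r
  /-- the kernel on `ℝ^d × ℝ^d`, whose restriction to `X × X` is the kernel `k` of the RKHS -/
  ktilde : EuclideanSpace ℝ (Fin d) → EuclideanSpace ℝ (Fin d) → ℝ
  hksmooth : ContDiff ℝ r (Function.uncurry ktilde)
  /-- `k ≠ 0` -/
  hkne : ∃ x x' : X, ktilde x x' ≠ 0
  /-- the canonical feature map of the RKHS `H` -/
  Φ : X → H
  /-- reproducing kernel: `k (x, x') = ⟪Φ x, Φ x'⟫` -/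
  hfeature : ∀ x x' : X, ktilde x x' = ⟪Φ x, Φ x'⟫
  /-- `H` is generated by the kernel `k` -/
  hgen : (Submodule.span ℝ (Set.range Φ)).topologicalClosure = ⊤
  P : Measure (X × Y)
  hP : IsProbabilityMeasure P
  /-- the loss function -/
  L : X → Y → ℝ → ℝ
  hLnonneg : ∀ x y t, 0 ≤ L x y t
  hLconvex : ∀ x y, ConvexOn ℝ Set.univ (L x y)
  /-- order of the Nemitski loss -/
  p : ℝ
  hp : 1 ≤ p
  b : X × Y → ℝ
  c : ℝ
  hc : 0 < c
  hbL2 : MemLp b 2 P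
  /-- `L` is a `P`-square-integrable Nemitski loss of order `p` -/
  hNemitski : ∀ x y t, L x y t ≤ b (x, y) + c * |t| ^ p
  /-- first partial derivative of the loss w.r.t. `t` -/
  L' : X → Y → ℝ → ℝ
  /-- second partial derivative of the loss w.r.t. `t` -/
  L'' : X → Y → ℝ → ℝ
  hL' : ∀ x y t, HasDerivAt (L x y) (L' x y t) t
  hL'' : ∀ x y t, HasDerivAt (L' x y) (L'' x y t) t
  hL'cont : Continuous fun q : (X × Y) × ℝ => L' q.1.1 q.1.2 q.2
  hL''cont : Continuous fun q : (X × Y) × ℝ => L'' q.1.1 q.1.2 q.2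
  b' : ℝ → X × Y → ℝ
  hb'L2 : ∀ a : ℝ, 0 < a → MemLp (b' a) 2 P
  hb'bound : ∀ a : ℝ, 0 < a → ∀ (x : X) (y : Y) (t : ℝ), |t| ≤ a → |L' x y t| ≤ b' a (x, y)
  b'' : ℝ → ℝ
  hb''bound : ∀ a : ℝ, 0 < a → ∀ (x : X) (y : Y) (t : ℝ), |t| ≤ a → |L'' x y t| ≤ b'' a
  /-- `fP lam` is the minimizer of the `lam`-regularized risk in `H` -/
  fP : ℝ → H
  hfPmin : ∀ lam : ℝ, 0 < lam → ∀ g : H,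
      (∫ (z : X × Y), L z.1 z.2 ⟪fP lam, Φ z.1⟫ ∂P) + lam * ‖fP lam‖ ^ 2 ≤
      (∫ (z : X × Y), L z.1 z.2 ⟪g, Φ z.1⟫ ∂P) + lam * ‖g‖ ^ 2
  hfPuniq : ∀ lam : ℝ, 0 < lam → ∀ g : H,
      (∫ (z : X × Y), L z.1 z.2 ⟪g, Φ z.1⟫ ∂P) + lam * ‖g‖ ^ 2 ≤
      (∫ (z : X × Y), L z.1 z.2 ⟪fP lam, Φ z.1⟫ ∂P) + lam * ‖fP lam‖ ^ 2 → g = fP lam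
  /-- `fD n D lam` is the minimizer of the `lam`-regularized empirical risk for data `D` -/
  fD : (n : ℕ) → (Fin n → X × Y) → ℝ → H
  hfDmin : ∀ (n : ℕ) (D : Fin n → X × Y) (lam : ℝ), 0 < lam → ∀ g : H,
      ((n : ℝ)⁻¹ * ∑ i, L (D i).1 (D i).2 ⟪fD n D lam, Φ (D i).1⟫) + lam * ‖fD n D lam‖ ^ 2 ≤
      ((n : ℝ)⁻¹ * ∑ i, L (D i).1 (D i).2 ⟪g, Φ (D i).1⟫) + lam * ‖g‖ ^ 2
  hfDuniq : ∀ (n : ℕ) (D : Fin n → X × Y) (lam : ℝ), 0 < lam → ∀ g : H,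
      ((n : ℝ)⁻¹ * ∑ i, L (D i).1 (D i).2 ⟪g, Φ (D i).1⟫) + lam * ‖g‖ ^ 2 ≤
      ((n : ℝ)⁻¹ * ∑ i, L (D i).1 (D i).2 ⟪fD n D lam, Φ (D i).1⟫) +
        lam * ‖fD n D lam‖ ^ 2 → g = fD n D lam
  Q : Measure Ω
  hQ : IsProbabilityMeasure Q
  /-- the i.i.d. data `(X_1,Y_1), (X_2,Y_2), …` -/
  Z : ℕ → Ω → X × Y
  hZmeas : ∀ i, Measurable (Z i)
  hZlaw : ∀ i, Measure.map (Z i) Q = P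
  hZindep : iIndepFun (m := fun _ : ℕ => inferInstance) Z Q

variable {d : ℕ} {H : Type} [NormedAddCommGroup H] [InnerProductSpace ℝ H] [CompleteSpace H]
  {Ω : Type} [MeasurableSpace Ω]

/-- the estimator `f_{D_n, Λ_n}` based on the first `n` data points and the (random)
regularization parameter `Λ_n` -/
def RegKernelSetting.fDhat (S : RegKernelSetting d H Ω) (Lam : ℕ → Ω → ℝ) (n : ℕ) (ω : Ω) : H :=
  S.fD n (fun i : Fin n => S.Z i ω) (Lam n ω)

/-- convergence in distribution (weak convergence) of a sequence of random elements to a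
probability measure -/
def TendstoInDistribution {α : Type*} [TopologicalSpace α] [MeasurableSpace α]
    (Q : Measure Ω) (W : ℕ → Ω → α) (μ : Measure α) : Prop :=
  ∀ g : BoundedContinuousFunction α ℝ,
    Tendsto (fun n => ∫ ω, g (W n ω) ∂Q) atTop (𝓝 (∫ x, g x ∂μ))

/-- `ψ : H → ℝ^m` is Hadamard differentiable at `f0` with derivative `ψ' ∈ H^m`. -/
def HadamardDiffAt {H : Type} [NormedAddCommGroup H] [InnerProductSpace ℝ H]
    {m : ℕ} (ψ : H → (Fin m → ℝ)) (f0 : H) (ψ' : Fin m → H) : Prop :=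
  ∀ (t : ℕ → ℝ) (hs : ℕ → H) (h : H),
    (∀ ℓ, 0 < t ℓ) → Tendsto t atTop (𝓝 0) → Tendsto hs atTop (𝓝 h) →
    Tendsto (fun ℓ => (t ℓ)⁻¹ • (ψ (f0 + t ℓ • hs ℓ) - ψ f0)) atTop
      (𝓝 fun j => ⟪ψ' j, h⟫)

/-- the covariance matrix `Cov(g(Z))` of an `ℝ^m`-valued random vector `g` under `P` -/
def covMatrix {α : Type*} [MeasurableSpace α] (P : Measure α) {m : ℕ}
    (g : α → Fin m → ℝ) : Matrix (Fin m) (Fin m) ℝ :=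
  Matrix.of fun i j =>
    ∫ z, (g z i - ∫ z', g z' i ∂P) * (g z j - ∫ z', g z' j ∂P) ∂P


open scoped Matrix

theorem Matrix.rank_eq_card_iff_mulVec_eq_zero {n K : Type*} [Fintype n] [Field K]
    (M : Matrix n n K) : M.rank = Fintype.card n ↔ ∀ v, M *ᵥ v = 0 → v = 0 := by
  rw [← Matrix.ker_mulVecLin_eq_bot_iff, LinearMap.ker_eq_bot,
    LinearMap.injective_iff_surjective, ← LinearMap.range_eq_top, Matrix.rank]
  constructor
  · exact fun h => Submodule.eq_top_of_finrank_eq (by simpa using h)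
  · intro h
    rw [h, finrank_top, Module.finrank_fintype_fun_eq_card]

section Covariance

variable {α : Type*} [MeasurableSpace α] {μ : Measure α} {m : ℕ} {g : α → Fin m → ℝ}

theorem covMatrix_mulVec_apply [IsFiniteMeasure μ] (hg : ∀ j, MemLp (fun z => g z j) 2 μ)
    (a : Fin m → ℝ) (i : Fin m) :
    (covMatrix μ g *ᵥ a) i = cov[fun z => g z i, fun z => ∑ j, a j * g z j; μ] := by
  rw [covariance_fun_sum_right (fun j => (hg j).const_mul (a j)) (hg i), Matrix.mulVec,
    dotProduct]
  refine Finset.sum_congr rfl fun j _ => ?_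
  rw [covariance_const_mul_right, mul_comm]
  rfl

theorem covMatrix_mulVec_eq_zero_iff [IsProbabilityMeasure μ]
    (hg : ∀ j, MemLp (fun z => g z j) 2 μ) (a : Fin m → ℝ) :
    covMatrix μ g *ᵥ a = 0 ↔ ∃ c, ∀ᵐ z ∂μ, ∑ j, a j * g z j = c := by
  have hT : MemLp (fun z => ∑ j, a j * g z j) 2 μ :=
    memLp_finsetSum _ fun j _ => (hg j).const_mul (a j)
  constructor
  · intro h
    have hvar : Var[fun z => ∑ j, a j * g z j; μ] = 0 := by
      rw [← covariance_self hT.aemeasurable, covariance_fun_sum_left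
        (fun j => (hg j).const_mul (a j)) hT]
      simp [covariance_const_mul_left, ← covMatrix_mulVec_apply hg, h]
    exact ⟨_, ae_eq_integral_of_variance_eq_zero hT hvar⟩
  · rintro ⟨c, hc⟩
    have hmean : μ[fun z => ∑ j, a j * g z j] = c := by simp [integral_congr_ae hc]
    ext i
    rw [covMatrix_mulVec_apply hg, covariance, Pi.zero_apply]
    exact integral_eq_zero_of_ae (hc.mono fun z hz => by simp [hz, hmean])

end Covariance

theorem MeasureTheory.Measure.ae_fst_iff {α β : Type*} [MeasurableSpace α] [MeasurableSpace β]
    {P : Measure (α × β)} {p : α → Prop} (hp : MeasurableSet {x | p x}) :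
    (∀ᵐ x ∂P.fst, p x) ↔ ∀ᵐ z ∂P, p z.1 :=
  ae_map_iff measurable_fst.aemeasurable hp

section ConditionalSupport

variable {α β : Type*} [MeasurableSpace α] [MeasurableSpace β] {P : Measure (α × β)}
  {κ : α → Measure β}

theorem ae_measure_slice_eq_zero [IsFiniteMeasure P] [∀ x, IsProbabilityMeasure (κ x)]
    (hκ : ∀ s, MeasurableSet s → P s = ∫⁻ x, κ x {y | (x, y) ∈ s} ∂P.fst)
    {s : Set (α × β)} (hs : MeasurableSet s) (hPs : P s = 0) :
    ∀ᵐ x ∂P.fst, κ x {y | (x, y) ∈ s} = 0 := by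
  set f : α → ℝ≥0∞ := fun x => κ x {y | (x, y) ∈ sᶜ}
  have hf_int : ∫⁻ x, f x ∂P.fst = ∫⁻ _, 1 ∂P.fst := by
    rw [← hκ _ hs.compl, measure_compl hs (measure_ne_top P s), hPs, tsub_zero,
      lintegral_const, one_mul, Measure.fst_univ]
  -- `f` need not be measurable; only the majorant `1` has to be.
  have hf_one : f =ᵐ[P.fst] 1 :=
    ae_eq_of_ae_le_of_lintegral_le (.of_forall fun x => prob_le_one) (by simp [hf_int])
      aemeasurable_const hf_int.ge
  filter_upwards [hf_one] with x hx
  exact (prob_compl_eq_one_iff (measurable_prodMk_left hs)).mp hx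

variable [TopologicalSpace α] [TopologicalSpace β] [OpensMeasurableSpace (α × β)]

theorem ae_forall_mem_support_notMem_of_isOpen [IsFiniteMeasure P]
    [∀ x, IsProbabilityMeasure (κ x)]
    (hκ : ∀ s, MeasurableSet s → P s = ∫⁻ x, κ x {y | (x, y) ∈ s} ∂P.fst)
    {O : Set (α × β)} (hO : IsOpen O) (hPO : P O = 0) :
    ∀ᵐ x ∂P.fst, ∀ y, (∀ U, IsOpen U → y ∈ U → 0 < κ x U) → (x, y) ∉ O := by
  filter_upwards [ae_measure_slice_eq_zero hκ hO.measurableSet hPO] with x hx y hy hxy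
  exact (hy _ (hO.preimage (Continuous.prodMk_right x)) hxy).ne' hx

theorem exists_ae_mul_eq_const_iff [IsFiniteMeasure P] [∀ x, IsProbabilityMeasure (κ x)]
    (hκ : ∀ s, MeasurableSet s → P s = ∫⁻ x, κ x {y | (x, y) ∈ s} ∂P.fst)
    {ℓ : α × β → ℝ} (hℓ : Continuous ℓ)
    (hnondeg : ∀ᵐ x ∂P.fst, ∃ y₁ y₂ : β,
      (∀ U : Set β, IsOpen U → y₁ ∈ U → 0 < κ x U) ∧
      (∀ U : Set β, IsOpen U → y₂ ∈ U → 0 < κ x U) ∧ ℓ (x, y₁) ≠ ℓ (x, y₂))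
    {u : α → ℝ} (hu : Continuous u) :
    (∃ c, ∀ᵐ z ∂P, ℓ z * u z.1 = c) ↔ ∀ᵐ x ∂P.fst, u x = 0 := by
  constructor
  · rintro ⟨c, hc⟩
    have hO : IsOpen {z : α × β | ℓ z * u z.1 ≠ c} :=
      isOpen_ne_fun (hℓ.mul (hu.comp continuous_fst)) continuous_const
    filter_upwards [ae_forall_mem_support_notMem_of_isOpen hκ hO (ae_iff.mp hc), hnondeg]
      with x hx ⟨y₁, y₂, hy₁, hy₂, hne⟩
    by_contra hux
    have h₁ : ℓ (x, y₁) * u x = c := not_not.mp (hx y₁ hy₁)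
    have h₂ : ℓ (x, y₂) * u x = c := not_not.mp (hx y₂ hy₂)
    exact hne (mul_right_cancel₀ hux (h₁.trans h₂.symm))
  · intro h
    exact ⟨0, (ae_of_ae_map measurable_fst.aemeasurable h).mono fun z hz => by simp [hz]⟩

end ConditionalSupport

theorem ConvexOn.nonneg_of_hasDerivAt_of_hasDerivAt {f f' : ℝ → ℝ} {f'' t : ℝ}
    (hf : ConvexOn ℝ Set.univ f) (hf' : ∀ s, HasDerivAt f (f' s) s)
    (hf'' : HasDerivAt f' f'' t) : 0 ≤ f'' := by
  have hderiv : deriv f = f' := funext fun s => (hf' s).deriv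
  have hmono : Monotone f' :=
    hderiv ▸ monotoneOn_univ.mp (hf.monotoneOn_deriv fun s _ => (hf' s).differentiableAt)
  exact hf''.deriv ▸ hmono.deriv_nonneg

section FeatureMap

variable {α E : Type*} [NormedAddCommGroup E] [InnerProductSpace ℝ E]

theorem inner_map_comm_of_rightInverse {K K' : E → E} (hK : ∀ f g, ⟪K f, g⟫ = ⟪f, K g⟫)
    (hK' : Function.RightInverse K' K) (f g : E) : ⟪K' f, g⟫ = ⟪f, K' g⟫ := by
  nth_rw 1 [← hK' g]
  rw [← hK, hK' f]

theorem continuous_of_continuous_inner [TopologicalSpace α] {φ : α → E}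
    (h : Continuous fun p : α × α => ⟪φ p.1, φ p.2⟫) : Continuous φ := by
  rw [continuous_iff_continuousAt]
  intro x
  have hsq : Tendsto (fun x' => ‖φ x' - φ x‖ ^ 2) (𝓝 x) (𝓝 0) := by
    have hcont : Continuous fun x' => ⟪φ x', φ x'⟫ - 2 * ⟪φ x', φ x⟫ + ⟪φ x, φ x⟫ :=
      ((h.comp (continuous_id.prodMk continuous_id)).sub
        (continuous_const.mul (h.comp (continuous_id.prodMk continuous_const)))).add
        continuous_const
    convert hcont.tendsto x using 2
    · rw [norm_sub_sq_real, real_inner_self_eq_norm_sq, real_inner_self_eq_norm_sq]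
    · ring
  simpa [ContinuousAt, tendsto_iff_norm_sub_tendsto_zero] using hsq.sqrt

variable [MeasurableSpace α] {μ : Measure α} {w : α → ℝ} {φ : α → E}

/-- `K_P = 2λ₀ • id + weightedFeatureOp P (L''(·, ·, f_{P,λ₀})) (Φ ∘ Prod.fst)`. -/
def weightedFeatureOp (μ : Measure α) (w : α → ℝ) (φ : α → E) (f : E) : E :=
  ∫ z, (w z * ⟪f, φ z⟫) • φ z ∂μ

variable [CompleteSpace E]

theorem inner_weightedFeatureOp {f : E}
    (hf : Integrable (fun z => (w z * ⟪f, φ z⟫) • φ z) μ) (g : E) :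
    ⟪weightedFeatureOp μ w φ f, g⟫ = ∫ z, w z * ⟪f, φ z⟫ * ⟪g, φ z⟫ ∂μ := by
  rw [weightedFeatureOp, real_inner_comm, ← integral_inner hf]
  simp only [real_inner_smul_right]

theorem inner_weightedFeatureOp_comm {f g : E}
    (hf : Integrable (fun z => (w z * ⟪f, φ z⟫) • φ z) μ)
    (hg : Integrable (fun z => (w z * ⟪g, φ z⟫) • φ z) μ) :
    ⟪weightedFeatureOp μ w φ f, g⟫ = ⟪f, weightedFeatureOp μ w φ g⟫ := by
  rw [inner_weightedFeatureOp hf, real_inner_comm, inner_weightedFeatureOp hg]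
  simp only [mul_right_comm]

theorem ae_inner_add_weightedFeatureOp_eq_zero_iff {c : ℝ} (hc : 0 < c) (hw : 0 ≤ w) {v : E}
    (hv : Integrable (fun z => (w z * ⟪v, φ z⟫) • φ z) μ) :
    (∀ᵐ z ∂μ, ⟪c • v + weightedFeatureOp μ w φ v, φ z⟫ = 0) ↔ ∀ᵐ z ∂μ, ⟪v, φ z⟫ = 0 := by
  set T := weightedFeatureOp μ w φ v
  constructor
  · intro h
    have hTφ : ∀ᵐ z ∂μ, ⟪T, φ z⟫ = -c * ⟪v, φ z⟫ := h.mono fun z hz => by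
      rw [inner_add_left, real_inner_smul_left] at hz
      linarith
    have hTT : ⟪T, T⟫ = -c * ∫ z, w z * ⟪v, φ z⟫ ^ 2 ∂μ := by
      rw [inner_weightedFeatureOp hv, ← integral_const_mul]
      refine integral_congr_ae (hTφ.mono fun z hz => ?_)
      simp only [hz]
      ring
    have hT : T = 0 := by
      refine real_inner_self_nonpos.mp (hTT ▸ ?_)
      exact mul_nonpos_of_nonpos_of_nonneg (by linarith)
        (integral_nonneg fun z => mul_nonneg (hw z) (sq_nonneg _))
    filter_upwards [h] with z hz
    rw [hT, add_zero, real_inner_smul_left] at hz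
    exact (mul_eq_zero.mp hz).resolve_left hc.ne'
  · intro h
    have hT : T = 0 := integral_eq_zero_of_ae (h.mono fun z hz => by simp [hz])
    filter_upwards [h] with z hz
    rw [hT, add_zero, real_inner_smul_left, hz, mul_zero]

end FeatureMap

namespace RegKernelSetting

variable (S : RegKernelSetting d H Ω) {lam0 : ℝ} {KP KPinv : H →L[ℝ] H}

theorem compactSpace_X : CompactSpace S.X :=
  isCompact_iff_compactSpace.mp (Metric.isCompact_of_isClosed_isBounded S.hXclosed S.hXbdd)

theorem continuous_Φ : Continuous S.Φ := by
  refine continuous_of_continuous_inner ?_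
  simp only [← S.hfeature]
  exact S.hksmooth.continuous.comp (continuous_subtype_val.prodMap continuous_subtype_val)

theorem exists_pos_norm_le {F : Type*} [NormedAddCommGroup F] {u : S.X → F}
    (hu : Continuous u) : ∃ C, 0 < C ∧ ∀ x, ‖u x‖ ≤ C := by
  have := S.compactSpace_X
  obtain ⟨C, hC⟩ := isCompact_univ.exists_bound_of_continuousOn hu.continuousOn
  exact ⟨max C 1, by positivity, fun x => (hC x trivial).trans (le_max_left _ _)⟩

theorem continuous_inner_Φ (f : H) : Continuous fun x => ⟪f, S.Φ x⟫ :=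
  continuous_const.inner S.continuous_Φ

theorem continuous_L' (f : H) :
    Continuous fun z : S.X × S.Y => S.L' z.1 z.2 ⟪f, S.Φ z.1⟫ :=
  S.hL'cont.comp (continuous_id.prodMk ((S.continuous_inner_Φ f).comp continuous_fst))

theorem continuous_L'' (f : H) :
    Continuous fun z : S.X × S.Y => S.L'' z.1 z.2 ⟪f, S.Φ z.1⟫ :=
  S.hL''cont.comp (continuous_id.prodMk ((S.continuous_inner_Φ f).comp continuous_fst))

theorem memLp_L'_mul (f : H) {u : S.X → ℝ} (hu : Continuous u) :
    MemLp (fun z : S.X × S.Y => S.L' z.1 z.2 ⟪f, S.Φ z.1⟫ * u z.1) 2 S.P := by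
  obtain ⟨a, ha, hfa⟩ := S.exists_pos_norm_le (S.continuous_inner_Φ f)
  obtain ⟨C, -, hC⟩ := S.exists_pos_norm_le hu
  refine MemLp.of_le ((S.hb'L2 a ha).mul_const C)
    ((S.continuous_L' f).mul (hu.comp continuous_fst)).aestronglyMeasurable
    (.of_forall fun z => ?_)
  have hL' := S.hb'bound a ha z.1 z.2 _ (hfa z.1)
  rw [norm_mul, Real.norm_eq_abs]
  exact (mul_le_mul hL' (hC z.1) (norm_nonneg _) ((abs_nonneg _).trans hL')).trans
    (le_abs_self _)

theorem integrable_L''_smul_Φ (f g : H) :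
    Integrable (fun z : S.X × S.Y =>
      (S.L'' z.1 z.2 ⟪f, S.Φ z.1⟫ * ⟪g, S.Φ z.1⟫) • S.Φ z.1) S.P := by
  have := S.hP
  obtain ⟨a, ha, hfa⟩ := S.exists_pos_norm_le (S.continuous_inner_Φ f)
  have hgΦ : Continuous fun x => ⟪g, S.Φ x⟫ • S.Φ x :=
    (S.continuous_inner_Φ g).smul S.continuous_Φ
  obtain ⟨C, -, hC⟩ := S.exists_pos_norm_le hgΦ
  have hcont : Continuous fun z : S.X × S.Y =>
      (S.L'' z.1 z.2 ⟪f, S.Φ z.1⟫ * ⟪g, S.Φ z.1⟫) • S.Φ z.1 :=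
    ((S.continuous_L'' f).mul ((S.continuous_inner_Φ g).comp continuous_fst)).smul
      (S.continuous_Φ.comp continuous_fst)
  refine Integrable.of_bound hcont.aestronglyMeasurable (S.b'' a * C) (.of_forall fun z => ?_)
  have hL'' := S.hb''bound a ha z.1 z.2 _ (hfa z.1)
  rw [mul_smul, norm_smul, Real.norm_eq_abs]
  exact mul_le_mul hL'' (hC z.1) (norm_nonneg _) ((abs_nonneg _).trans hL'')

theorem L''_nonneg (x : S.X) (y : S.Y) (t : ℝ) : 0 ≤ S.L'' x y t :=
  (S.hLconvex x y).nonneg_of_hasDerivAt_of_hasDerivAt (S.hL' x y) (S.hL'' x y t)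

theorem inner_inverse_comm
    (hKP : ∀ f : H, KP f = (2 * lam0) • f +
      weightedFeatureOp S.P (fun z => S.L'' z.1 z.2 ⟪S.fP lam0, S.Φ z.1⟫) (fun z => S.Φ z.1) f)
    (hKPinv : Function.RightInverse KPinv KP) (f g : H) : ⟪KPinv f, g⟫ = ⟪f, KPinv g⟫ := by
  refine inner_map_comm_of_rightInverse (fun f g => ?_) hKPinv f g
  rw [hKP, hKP, inner_add_left, inner_add_right, real_inner_smul_left, real_inner_smul_right,
    inner_weightedFeatureOp_comm (S.integrable_L''_smul_Φ _ f) (S.integrable_L''_smul_Φ _ g)]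

theorem ae_inner_inverse_eq_zero_iff (hlam0 : 0 < lam0)
    (hKP : ∀ f : H, KP f = (2 * lam0) • f +
      weightedFeatureOp S.P (fun z => S.L'' z.1 z.2 ⟪S.fP lam0, S.Φ z.1⟫) (fun z => S.Φ z.1) f)
    (hKPinv : Function.RightInverse KPinv KP) (v : H) :
    (∀ᵐ x ∂S.P.fst, ⟪KPinv v, S.Φ x⟫ = 0) ↔ ∀ᵐ x ∂S.P.fst, ⟪v, S.Φ x⟫ = 0 := by
  have hmeas (f : H) : MeasurableSet {x | ⟪f, S.Φ x⟫ = 0} :=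
    measurableSet_eq_fun (S.continuous_inner_Φ f).measurable measurable_const
  rw [Measure.ae_fst_iff (hmeas _), Measure.ae_fst_iff (hmeas _)]
  conv_rhs => rw [← hKPinv v, hKP]
  exact (ae_inner_add_weightedFeatureOp_eq_zero_iff (by positivity)
    (fun z => S.L''_nonneg _ _ _) (S.integrable_L''_smul_Φ _ _)).symm

end RegKernelSetting

theorem covariance_matrix_full_rank_iff_general
    (S : RegKernelSetting d H Ω) (lam0 : ℝ) (hlam0 : 0 < lam0)
    {m : ℕ} (ψ' : Fin m → H)
    (KP KPinv : H →L[ℝ] H)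
    (hKP : ∀ f : H, KP f = (2 * lam0) • f +
      ∫ (z : S.X × S.Y), (S.L'' z.1 z.2 ⟪S.fP lam0, S.Φ z.1⟫ * ⟪f, S.Φ z.1⟫) • S.Φ z.1 ∂S.P)
    (hKPinv₂ : ∀ f : H, KP (KPinv f) = f)
    (condP : S.X → Measure S.Y) (hcond1 : ∀ x, IsProbabilityMeasure (condP x))
    (hcond2 : ∀ s : Set (S.X × S.Y), MeasurableSet s →
      S.P s = ∫⁻ x, condP x {y | (x, y) ∈ s} ∂S.P.fst)
    (hnondeg1 : ∀ᵐ x ∂S.P.fst, ∃ y₁ y₂ : S.Y,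
      (∀ U : Set S.Y, IsOpen U → y₁ ∈ U → 0 < condP x U) ∧
      (∀ U : Set S.Y, IsOpen U → y₂ ∈ U → 0 < condP x U) ∧
      S.L' x y₁ ⟪S.fP lam0, S.Φ x⟫ ≠ S.L' x y₂ ⟪S.fP lam0, S.Φ x⟫) :
    (covMatrix S.P (fun (z : S.X × S.Y) (j : Fin m) =>
        -(S.L' z.1 z.2 ⟪S.fP lam0, S.Φ z.1⟫) * ⟪ψ' j, KPinv (S.Φ z.1)⟫)).rank = m ↔
      ¬ ∃ a : Fin m → ℝ, a ≠ 0 ∧ ∀ᵐ x ∂S.P.fst, ∑ j, a j * ⟪ψ' j, S.Φ x⟫ = 0 := by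
  have := S.hP
  have := hcond1
  set ℓ : S.X × S.Y → ℝ := fun z => S.L' z.1 z.2 ⟪S.fP lam0, S.Φ z.1⟫
  have hG (j : Fin m) : MemLp (fun z => -ℓ z * ⟪ψ' j, KPinv (S.Φ z.1)⟫) 2 S.P := by
    simp only [neg_mul]
    exact (S.memLp_L'_mul _ (continuous_const.inner (KPinv.continuous.comp S.continuous_Φ))).neg
  have hker (a : Fin m → ℝ) :
      covMatrix S.P (fun z j => -ℓ z * ⟪ψ' j, KPinv (S.Φ z.1)⟫) *ᵥ a = 0 ↔
        ∀ᵐ x ∂S.P.fst, ∑ j, a j * ⟪ψ' j, S.Φ x⟫ = 0 := by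
    set h := ∑ j, a j • ψ' j
    have hh (v : H) : ⟪h, v⟫ = ∑ j, a j * ⟪ψ' j, v⟫ := by
      simp [h, sum_inner, real_inner_smul_left]
    have hsum (z : S.X × S.Y) :
        ∑ j, a j * (-ℓ z * ⟪ψ' j, KPinv (S.Φ z.1)⟫) = ℓ z * -⟪KPinv h, S.Φ z.1⟫ := by
      rw [S.inner_inverse_comm hKP hKPinv₂, hh, ← Finset.sum_neg_distrib, Finset.mul_sum]
      exact Finset.sum_congr rfl fun j _ => by ring
    simp_rw [covMatrix_mulVec_eq_zero_iff hG a, hsum]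
    refine (exists_ae_mul_eq_const_iff (u := fun x => -⟪KPinv h, S.Φ x⟫) hcond2
      (S.continuous_L' _) hnondeg1 (S.continuous_inner_Φ _).neg).trans ?_
    simp only [neg_eq_zero, S.ae_inner_inverse_eq_zero_iff hlam0 hKP hKPinv₂, hh]
  have hrank := Matrix.rank_eq_card_iff_mulVec_eq_zero
    (covMatrix S.P fun z j => -ℓ z * ⟪ψ' j, KPinv (S.Φ z.1)⟫)
  rw [Fintype.card_fin] at hrank
  refine hrank.trans ?_
  simp only [hker, not_exists, not_and]
  exact forall_congr' fun a => not_imp_not.symm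

/-- Lemma: non-degeneracy of the asymptotic covariance matrix.
Assume that for `P_X`-a.e. `x` there are `y₁, y₂ ∈ supp P(dy|x)` with
`L'(x,y₁,f_{P,λ₀}(x)) ≠ L'(x,y₂,f_{P,λ₀}(x))`.  Then `Σ_P = Cov(g_{P,λ₀}(X₁,Y₁))` has full
rank if and only if there is no `a ∈ ℝ^m ∖ {0}` with `aᵀ ψ'_{f_{P,λ₀}} = 0` `P_X`-a.s. -/
theorem covariance_matrix_full_rank_iff
    (S : RegKernelSetting d H Ω) (lam0 : ℝ) (hlam0 : 0 < lam0)
    {m : ℕ} (ψ : H → (Fin m → ℝ)) (ψ' : Fin m → H)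
    (hψ : HadamardDiffAt ψ (S.fP lam0) ψ')
    (KP KPinv : H →L[ℝ] H)
    (hKP : ∀ f : H, KP f = (2 * lam0) • f +
      ∫ (z : S.X × S.Y), (S.L'' z.1 z.2 ⟪S.fP lam0, S.Φ z.1⟫ * ⟪f, S.Φ z.1⟫) • S.Φ z.1 ∂S.P)
    (hKPinv₁ : ∀ f : H, KPinv (KP f) = f) (hKPinv₂ : ∀ f : H, KP (KPinv f) = f)
    (condP : S.X → Measure S.Y) (hcond1 : ∀ x, IsProbabilityMeasure (condP x))
    (hcond2 : ∀ s : Set (S.X × S.Y), MeasurableSet s →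
      S.P s = ∫⁻ x, condP x {y | (x, y) ∈ s} ∂S.P.fst)
    (hnondeg1 : ∀ᵐ x ∂S.P.fst, ∃ y₁ y₂ : S.Y,
      (∀ U : Set S.Y, IsOpen U → y₁ ∈ U → 0 < condP x U) ∧
      (∀ U : Set S.Y, IsOpen U → y₂ ∈ U → 0 < condP x U) ∧
      S.L' x y₁ ⟪S.fP lam0, S.Φ x⟫ ≠ S.L' x y₂ ⟪S.fP lam0, S.Φ x⟫) :
    (covMatrix S.P (fun (z : S.X × S.Y) (j : Fin m) =>
        -(S.L' z.1 z.2 ⟪S.fP lam0, S.Φ z.1⟫) * ⟪ψ' j, KPinv (S.Φ z.1)⟫)).rank = m ↔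
      ¬ ∃ a : Fin m → ℝ, a ≠ 0 ∧ ∀ᵐ x ∂S.P.fst, ∑ j, a j * ⟪ψ' j, S.Φ x⟫ = 0 :=
  covariance_matrix_full_rank_iff_general S lam0 hlam0 ψ' KP KPinv hKP hKPinv₂ condP hcond1 hcond2
    hnondeg1
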